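/- arXiv:2601.21131 — 2 statements merged into one kernel-verified Lean document; each statement's English description precedes it below -/
import Mathlib

section
/- Suppose Φ*(z) < 1 for every z ∈ ℝ. Then for every arm a ∈ [K], every n ≥ 0, and every noise realization {ξ_{a;i}} ∈ E_ξ(∞) (i.e., belonging to E_ξ(x) for some finite x), the hitting time τ_{a;n} is conditionally almost surely finite, and n_{a;τ_{a;n}} = n holds conditionally almost surely: P^ξ(τ_{a;n} < ∞) = P^ξ(n_{a;τ_{a;n}} = n) = 1. -/
/-! On the noise event `E_ξ(x)` the prior-regularised empirical means of all arms are bounded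
by a constant `C`. Hence in a round where arm `a` samples above `2C√n` and every other arm
samples below `0`, arm `a` has the largest index as long as it has fewer than `n` pulls.
Since `Φ* < 1` (tested in the directions `(±1, 0)`), both sample regions have positive
probability, so these rounds are independent events of one fixed positive probability; by the
second Borel–Cantelli lemma they a.s. occur infinitely often, and each occurrence adds a pull
of `a` until it has `n`. -/

open MeasureTheory ProbabilityTheory Filter

namespace ThompsonSamplingCond

variable {Ω : Type*} [MeasurableSpace Ω] {K : ℕ}

/-- `n_{a;t}`: number of pulls of arm `a` in rounds `1,…,t`. -/
def pulls (A : ℕ → Ω → Fin K) (a : Fin K) (t : ℕ) (ω : Ω) : ℕ :=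
  ∑ s ∈ Finset.Icc 1 t, if A s ω = a then 1 else 0

/-- Conditional-on-noise model (`σ = 1`): the reward obtained from the `i`-th pull of arm
`a` is `R_{a,i} = μ_a + ξ_{a;i}` with a *fixed* noise array `ξ`, so the reward earned at
round `s` is `μ_{A_s} + ξ_{A_s; n_{A_s;s}}`.  This is `μ̄_{a;t}`, the prior-regularized
empirical mean of arm `a` after round `t` (with `n̄_{a;t} = n_{a;t}+1`). -/
noncomputable def empMean (μarm : Fin K → ℝ) (ξ : Fin K → ℕ → ℝ)
    (A : ℕ → Ω → Fin K) (a : Fin K) (t : ℕ) (ω : Ω) : ℝ :=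
  (∑ s ∈ Finset.Icc 1 t, if A s ω = a then μarm a + ξ a (pulls A a s ω) else 0) /
    (pulls A a t ω + 1)

/-- The Thompson sampling index `θ̄_{a;t} = μ̄_{a;t-1} + Z_{a;t}/√(n̄_{a;t-1})` (`σ = 1`). -/
noncomputable def tsIndex (μarm : Fin K → ℝ) (ξ : Fin K → ℕ → ℝ)
    (Z : Fin K → ℕ → Ω → ℝ) (A : ℕ → Ω → Fin K) (a : Fin K) (t : ℕ) (ω : Ω) : ℝ :=
  empMean μarm ξ A a (t - 1) ω + Z a t ω / Real.sqrt ((pulls A a (t - 1) ω : ℝ) + 1)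

/-- The conditional-on-noise Thompson sampling model: the sampling variables
`{Z_{a;t}}_{a∈[K],t≥1}` are i.i.d. with law `μZ`, everything is measurable, and at each
round `t ≥ 1` the selected arm `A_t` maximizes the Thompson sampling index. -/
def IsCondTSModel (P : Measure Ω) (μarm : Fin K → ℝ) (ξ : Fin K → ℕ → ℝ)
    (Z : Fin K → ℕ → Ω → ℝ) (A : ℕ → Ω → Fin K) (μZ : Measure ℝ) : Prop :=
  (∀ a t, Measurable (Z a t)) ∧ (∀ t, Measurable (A t)) ∧
  iIndepFun
    (fun p : Fin K × {t : ℕ // 1 ≤ t} => Z p.1 p.2) P ∧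
  (∀ (a : Fin K) (t : ℕ), 1 ≤ t → Measure.map (Z a t) P = μZ) ∧
  (∀ ω : Ω, ∀ t : ℕ, 1 ≤ t → ∀ b : Fin K,
    tsIndex μarm ξ Z A b t ω ≤ tsIndex μarm ξ Z A (A t ω) t ω)

/-- `ℱ^Z_t`: the σ-algebra generated by the sampling variables `{Z_{a;s} : a∈[K], s∈[t]}`. -/
def FZ (Z : Fin K → ℕ → Ω → ℝ) (t : ℕ) : MeasurableSpace Ω :=
  ⨆ (a : Fin K) (s : ℕ) (_ : 1 ≤ s) (_ : s ≤ t), MeasurableSpace.comap (Z a s) inferInstance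

/-- `𝔭^ξ_{a;t} = P^ξ(A_t = a | ℱ^Z_{t−1})`: the conditional pull probability. -/
noncomputable def pullProb (P : Measure Ω) (Z : Fin K → ℕ → Ω → ℝ)
    (A : ℕ → Ω → Fin K) (a : Fin K) (t : ℕ) : Ω → ℝ :=
  MeasureTheory.condExp (FZ Z (t - 1)) P (fun ω => if A t ω = a then (1 : ℝ) else 0)

/-- The event `E_ξ(x)` on noise realizations:
`max_a sup_{t≥1} |(t+1)^{-1/2} (log((t+1)∨e))^{-1} Σ_{i∈[t]} ξ_{a;i}| < x`. -/
def noiseEvent (ξ : Fin K → ℕ → ℝ) (x : ℝ) : Prop :=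
  ∀ a : Fin K, ∀ t : ℕ, 1 ≤ t →
    |∑ i ∈ Finset.Icc 1 t, ξ a i| <
      x * Real.sqrt ((t : ℝ) + 1) * Real.log (max ((t : ℝ) + 1) (Real.exp 1))

/-- `Φ`, the c.d.f. of the sampling distribution. -/
noncomputable def cdf (μZ : Measure ℝ) (z : ℝ) : ℝ := (μZ (Set.Iic z)).toReal

/-- `Φ̄ = 1 − Φ`. -/
noncomputable def sf (μZ : Measure ℝ) (z : ℝ) : ℝ := 1 - cdf μZ z

/-- `Φ*(z) = sup_{a²+a'²=1} P(aZ + a'Z' ≤ z)` for `Z, Z'` i.i.d. with law `μZ`. -/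
noncomputable def cdfStar (μZ : Measure ℝ) (z : ℝ) : ℝ :=
  ⨆ v : {v : ℝ × ℝ // v.1 ^ 2 + v.2 ^ 2 = 1},
    ((μZ.prod μZ) {p : ℝ × ℝ | v.1.1 * p.1 + v.1.2 * p.2 ≤ z}).toReal

/-- `Φ̄* = 1 − Φ*`. -/
noncomputable def sfStar (μZ : Measure ℝ) (z : ℝ) : ℝ := 1 - cdfStar μZ z

/-- `Φ̄*⁻(u) = inf{x : Φ̄*(x) ≤ u}`, the generalized inverse of `Φ̄*`. -/
noncomputable def sfStarInv (μZ : Measure ℝ) (u : ℝ) : ℝ := sInf {x : ℝ | sfStar μZ x ≤ u}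

/-- Assumption (B1). -/
def AssumptionB1 (μZ : Measure ℝ) : Prop :=
  IsProbabilityMeasure μZ ∧
  (∀ z : ℝ, 0 < cdf μZ z ∧ cdf μZ z < 1) ∧
  ∃ φ : ℝ → ℝ, (∀ z, HasDerivAt (cdf μZ) (φ z) z) ∧ Continuous φ ∧ ∃ C : ℝ, ∀ z, |φ z| ≤ C

/-- Assumption (B2). -/
def AssumptionB2 (μZ : Measure ℝ) : Prop :=
  Tendsto (fun z : ℝ => Real.log z / (- Real.log (cdf μZ (-z)))) atTop (nhds 0) ∧
  ∀ c : ℝ, 1 < c →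
    Tendsto (fun z : ℝ => max (Real.log z / (- Real.log (sf μZ z)))
      (z ^ 2 * sf μZ (c * z) / sf μZ z)) atTop (nhds 0)
/-- `τ_{a;n} = inf{t ≥ 0 : n_{a;t} ≥ n}`: the round of the `n`-th pull of arm `a`
(`⊤` if arm `a` is never pulled `n` times; `τ_{a;0} = 0`). -/
noncomputable def hitTime (A : ℕ → Ω → Fin K) (a : Fin K) (n : ℕ) (ω : Ω) : ℕ∞ :=
  sInf ((fun t : ℕ => (t : ℕ∞)) '' {t : ℕ | n ≤ pulls A a t ω})

end ThompsonSamplingCond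

namespace ProbabilityTheory

variable {Ω ι κ β : Type*} [MeasurableSpace Ω] [MeasurableSpace β] [Fintype ι] {P : Measure Ω}
  {X : ι × κ → Ω → β} {S : ι → Set β}

lemma iIndepFun.measure_biInter_iInter_preimage (hX : iIndepFun X P)
    (hS : ∀ i, MeasurableSet (S i)) (s : Finset κ) :
    P (⋂ k ∈ s, ⋂ i, X (i, k) ⁻¹' S i) = ∏ k ∈ s, ∏ i, P (X (i, k) ⁻¹' S i) := by
  have h := hX.measure_inter_preimage_eq_mul (Finset.univ ×ˢ s) (sets := fun p => S p.1)
    fun p _ => hS p.1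
  rw [Finset.prod_product_right] at h
  rw [← h]
  congr 1
  ext ω
  simp only [Set.mem_iInter, Finset.mem_product, Finset.mem_univ, true_and]
  exact ⟨fun hω p hp => hω p.2 hp p.1, fun hω k hk i => hω (i, k) hk⟩

lemma iIndepFun.measure_iInter_preimage (hX : iIndepFun X P) (hS : ∀ i, MeasurableSet (S i))
    (k : κ) : P (⋂ i, X (i, k) ⁻¹' S i) = ∏ i, P (X (i, k) ⁻¹' S i) := by
  simpa using hX.measure_biInter_iInter_preimage hS {k}

lemma iIndepFun.iIndepSet_iInter_preimage (hX : iIndepFun X P) (hXm : ∀ p, Measurable (X p))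
    (hS : ∀ i, MeasurableSet (S i)) : iIndepSet (fun k => ⋂ i, X (i, k) ⁻¹' S i) P := by
  refine (iIndepSet_iff_meas_biInter fun k => .iInter fun i => hXm _ (hS i)).2 fun s => ?_
  rw [hX.measure_biInter_iInter_preimage hS s]
  exact Finset.prod_congr rfl fun k _ => (hX.measure_iInter_preimage hS k).symm

end ProbabilityTheory

namespace ThompsonSamplingCond

section Deterministic

variable {Ω : Type*} {K : ℕ}

section Pulls

variable (A : ℕ → Ω → Fin K) (a : Fin K) (ω : Ω)

lemma pulls_zero : pulls A a 0 ω = 0 := by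
  simp [pulls]

lemma pulls_succ (t : ℕ) :
    pulls A a (t + 1) ω = pulls A a t ω + if A (t + 1) ω = a then 1 else 0 := by
  rw [pulls, Finset.sum_Icc_succ_top (by omega)]
  rfl

lemma pulls_succ_le (t : ℕ) : pulls A a (t + 1) ω ≤ pulls A a t ω + 1 := by
  rw [pulls_succ]
  split <;> omega

lemma pulls_mono : Monotone fun t => pulls A a t ω :=
  fun _ _ h => Finset.sum_le_sum_of_subset (Finset.Icc_subset_Icc_right h)

lemma exists_le_pulls_of_frequently {n : ℕ}
    (h : ∃ᶠ t in atTop, pulls A a t ω < n → A (t + 1) ω = a) :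
    ∃ t, n ≤ pulls A a t ω := by
  suffices ∀ k ≤ n, ∃ t, k ≤ pulls A a t ω from this n le_rfl
  intro k
  induction k with
  | zero => exact fun _ => ⟨0, Nat.zero_le _⟩
  | succ k ih =>
    intro hk
    obtain ⟨t₀, ht₀⟩ := ih (by omega)
    obtain ⟨t, ht₀t, hpull⟩ := frequently_atTop.1 h t₀
    by_cases hlt : pulls A a t ω < n
    · refine ⟨t + 1, ?_⟩
      have : pulls A a t₀ ω ≤ pulls A a t ω := pulls_mono A a ω ht₀t
      rw [pulls_succ, if_pos (hpull hlt)]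
      omega
    · exact ⟨t, by omega⟩

end Pulls

lemma apply_find_eq_of_le_succ {f : ℕ → ℕ} (h0 : f 0 = 0) (hf : ∀ t, f (t + 1) ≤ f t + 1)
    {n : ℕ} (h : ∃ t, n ≤ f t) : f (Nat.find h) = n := by
  refine le_antisymm ?_ (Nat.find_spec h)
  rcases hfind : Nat.find h with _ | u
  · rw [h0]
    exact Nat.zero_le n
  · have hu : ¬n ≤ f u := Nat.find_min h (by omega)
    have := hf u
    omega

section HitTime

variable {A : ℕ → Ω → Fin K} {a : Fin K} {n : ℕ} {ω : Ω}

lemma hitTime_eq_find (h : ∃ t, n ≤ pulls A a t ω) : hitTime A a n ω = Nat.find h :=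
  (Nat.mono_cast.map_isLeast (Nat.isLeast_find h)).csInf_eq

lemma hitTime_lt_top (h : ∃ t, n ≤ pulls A a t ω) : hitTime A a n ω < ⊤ := by
  rw [hitTime_eq_find h]
  exact ENat.natCast_lt_top _

lemma exists_hitTime_eq_and_pulls_eq (h : ∃ t, n ≤ pulls A a t ω) :
    ∃ t : ℕ, hitTime A a n ω = t ∧ pulls A a t ω = n :=
  ⟨Nat.find h, hitTime_eq_find h,
    apply_find_eq_of_le_succ (pulls_zero A a ω) (pulls_succ_le A a ω) h⟩

end HitTime

section Noise

variable {ξ : Fin K → ℕ → ℝ} {x : ℝ}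

lemma noiseEvent.pos (hx : noiseEvent ξ x) (a : Fin K) : 0 < x := by
  have hlog : 0 < Real.log (max ((1 : ℕ) + 1 : ℝ) (Real.exp 1)) :=
    Real.log_pos ((Real.one_lt_exp_iff.2 one_pos).trans_le (le_max_right _ _))
  have hsqrt : 0 < Real.sqrt ((1 : ℕ) + 1 : ℝ) := Real.sqrt_pos.2 (by positivity)
  have h := (abs_nonneg _).trans_lt (hx a 1 le_rfl)
  rw [mul_assoc] at h
  exact pos_of_mul_pos_left h (mul_pos hsqrt hlog).le

lemma log_max_exp_one_le {y : ℝ} (hy : 1 ≤ y) :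
    Real.log (max y (Real.exp 1)) ≤ 4 * Real.sqrt y := by
  set m := max y (Real.exp 1)
  have hm : 0 < m := lt_max_of_lt_left (by linarith)
  have hlog : Real.log m ≤ 2 * Real.sqrt m := by
    have := Real.log_le_sub_one_of_pos (Real.sqrt_pos.2 hm)
    rw [Real.log_sqrt hm.le] at this
    linarith
  have hm4 : m ≤ 2 ^ 2 * y :=
    max_le (by nlinarith) (by nlinarith [Real.exp_one_lt_d9])
  have hsqrt : Real.sqrt m ≤ 2 * Real.sqrt y := by
    simpa [Real.sqrt_mul (by norm_num : (0 : ℝ) ≤ 2 ^ 2)] using Real.sqrt_le_sqrt hm4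
  linarith

lemma abs_sum_noise_le (hx : noiseEvent ξ x) (b : Fin K) (p : ℕ) :
    |∑ i ∈ Finset.Icc 1 p, ξ b i| ≤ 4 * x * (p + 1) := by
  have hx0 := hx.pos b
  rcases Nat.eq_zero_or_pos p with rfl | hp
  · simp
    positivity
  have hy : (1 : ℝ) ≤ p + 1 := by linarith [(Nat.one_le_cast.2 hp : (1 : ℝ) ≤ p)]
  have hs := Real.mul_self_sqrt (by linarith : (0 : ℝ) ≤ p + 1)
  calc |∑ i ∈ Finset.Icc 1 p, ξ b i|
      ≤ x * Real.sqrt (p + 1) * Real.log (max (p + 1) (Real.exp 1)) := (hx b p hp).le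
    _ ≤ x * Real.sqrt (p + 1) * (4 * Real.sqrt (p + 1)) := by
        gcongr
        exact log_max_exp_one_le hy
    _ = 4 * x * (Real.sqrt (p + 1) * Real.sqrt (p + 1)) := by ring
    _ = 4 * x * (p + 1) := by rw [hs]

lemma sum_reward_eq (μarm : Fin K → ℝ) (ξ : Fin K → ℕ → ℝ) (A : ℕ → Ω → Fin K) (b : Fin K)
    (ω : Ω) (t : ℕ) :
    (∑ s ∈ Finset.Icc 1 t, if A s ω = b then μarm b + ξ b (pulls A b s ω) else 0) =
      pulls A b t ω * μarm b + ∑ i ∈ Finset.Icc 1 (pulls A b t ω), ξ b i := by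
  induction t with
  | zero => simp [pulls_zero]
  | succ t ih =>
    rw [Finset.sum_Icc_succ_top (by omega), ih, pulls_succ]
    split
    · rw [Finset.sum_Icc_succ_top (by omega)]
      push_cast
      ring
    · simp

lemma abs_empMean_le (hx : noiseEvent ξ x) (μarm : Fin K → ℝ) (A : ℕ → Ω → Fin K) (b : Fin K)
    (t : ℕ) (ω : Ω) :
    |empMean μarm ξ A b t ω| ≤ ∑ c, |μarm c| + 4 * x := by
  have hb := Finset.single_le_sum (fun c _ => abs_nonneg (μarm c)) (Finset.mem_univ b)
  have hp : (0 : ℝ) < pulls A b t ω + 1 := by positivity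
  rw [empMean, sum_reward_eq, abs_div, abs_of_pos hp, div_le_iff₀ hp]
  calc |(pulls A b t ω : ℝ) * μarm b + ∑ i ∈ Finset.Icc 1 (pulls A b t ω), ξ b i|
      ≤ pulls A b t ω * |μarm b| + 4 * x * (pulls A b t ω + 1) := by
        refine (abs_add_le _ _).trans (add_le_add ?_ (abs_sum_noise_le hx b _))
        rw [abs_mul, Nat.abs_cast]
    _ ≤ (∑ c, |μarm c| + 4 * x) * (pulls A b t ω + 1) := by nlinarith [abs_nonneg (μarm b)]

end Noise

def sampleRegion (a : Fin K) (M : ℝ) (b : Fin K) : Set ℝ :=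
  if b = a then Set.Ioi M else Set.Iio 0

lemma measurableSet_sampleRegion (a : Fin K) (M : ℝ) (b : Fin K) :
    MeasurableSet (sampleRegion a M b) := by
  unfold sampleRegion
  split_ifs
  exacts [measurableSet_Ioi, measurableSet_Iio]

section GoodRound

variable {μarm : Fin K → ℝ} {ξ : Fin K → ℕ → ℝ} {Z : Fin K → ℕ → Ω → ℝ}
  {A : ℕ → Ω → Fin K} {ω : Ω} {C : ℝ}

lemma tsIndex_lt_of_neg {b : Fin K} {t : ℕ} (hC : |empMean μarm ξ A b (t - 1) ω| ≤ C)
    (hZ : Z b t ω < 0) : tsIndex μarm ξ Z A b t ω < C := by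
  have : Z b t ω / Real.sqrt ((pulls A b (t - 1) ω : ℝ) + 1) < 0 :=
    div_neg_of_neg_of_pos hZ (Real.sqrt_pos.2 (by positivity))
  rw [tsIndex]
  linarith [(abs_le.1 hC).2]

lemma le_tsIndex_of_pulls_lt {a : Fin K} {t n : ℕ} (hC : |empMean μarm ξ A a t ω| ≤ C)
    (hp : pulls A a t ω < n) (hZ : 2 * C * Real.sqrt n < Z a (t + 1) ω) :
    C ≤ tsIndex μarm ξ Z A a (t + 1) ω := by
  have hs : 0 < Real.sqrt ((pulls A a t ω : ℝ) + 1) := Real.sqrt_pos.2 (by positivity)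
  have hsn : Real.sqrt ((pulls A a t ω : ℝ) + 1) ≤ Real.sqrt n :=
    Real.sqrt_le_sqrt (by exact_mod_cast hp)
  have hZ' : 2 * C ≤ Z a (t + 1) ω / Real.sqrt ((pulls A a t ω : ℝ) + 1) := by
    rw [le_div_iff₀ hs]
    nlinarith [(abs_nonneg _).trans hC]
  rw [tsIndex, Nat.add_sub_cancel]
  linarith [(abs_le.1 hC).1]

lemma arm_eq_of_goodRound {a : Fin K} {t n : ℕ}
    (hmax : ∀ b, tsIndex μarm ξ Z A b (t + 1) ω ≤ tsIndex μarm ξ Z A (A (t + 1) ω) (t + 1) ω)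
    (hC : ∀ b s, |empMean μarm ξ A b s ω| ≤ C) (hp : pulls A a t ω < n)
    (hZ : ∀ b, Z b (t + 1) ω ∈ sampleRegion a (2 * C * Real.sqrt n) b) :
    A (t + 1) ω = a := by
  by_contra hA
  have hlower := le_tsIndex_of_pulls_lt (hC a t) hp (by simpa [sampleRegion] using hZ a)
  have hupper := tsIndex_lt_of_neg (hC _ _) (by simpa [sampleRegion, hA] using hZ (A (t + 1) ω))
  linarith [hmax a]

lemma exists_le_pulls_of_mem_limsup {a : Fin K} {n : ℕ}
    (hmax : ∀ t, 1 ≤ t → ∀ b, tsIndex μarm ξ Z A b t ω ≤ tsIndex μarm ξ Z A (A t ω) t ω)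
    (hC : ∀ b s, |empMean μarm ξ A b s ω| ≤ C)
    (hω : ω ∈ limsup (fun t => ⋂ b, Z b (t + 1) ⁻¹' sampleRegion a (2 * C * Real.sqrt n) b)
      atTop) :
    ∃ t, n ≤ pulls A a t ω :=
  exists_le_pulls_of_frequently A a ω <| (mem_limsup_iff_frequently_mem.1 hω).mono
    fun t hgood hp => arm_eq_of_goodRound (hmax (t + 1) (by omega)) hC hp
      (by simpa only [Set.mem_iInter, Set.mem_preimage] using hgood)

end GoodRound

end Deterministic

section SamplingLaw

variable {μZ : Measure ℝ} [IsProbabilityMeasure μZ]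

lemma measureReal_le_cdfStar {c : ℝ} (hc : c ^ 2 = 1) (z : ℝ) :
    μZ.real {y | c * y ≤ z} ≤ cdfStar μZ z := by
  have hset : {p : ℝ × ℝ | c * p.1 + 0 * p.2 ≤ z} = {y | c * y ≤ z} ×ˢ Set.univ := by
    ext p
    simp
  have hbdd : BddAbove (Set.range fun v : {v : ℝ × ℝ // v.1 ^ 2 + v.2 ^ 2 = 1} =>
      ((μZ.prod μZ) {p : ℝ × ℝ | v.1.1 * p.1 + v.1.2 * p.2 ≤ z}).toReal) := by
    refine ⟨1, ?_⟩
    rintro _ ⟨v, rfl⟩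
    exact measureReal_le_one
  calc μZ.real {y | c * y ≤ z} = ((μZ.prod μZ) {p : ℝ × ℝ | c * p.1 + 0 * p.2 ≤ z}).toReal := by
        rw [hset, Measure.prod_prod, measure_univ, mul_one]
        rfl
    _ ≤ cdfStar μZ z := le_ciSup hbdd ⟨(c, 0), by simpa using hc⟩

lemma measure_Ioi_ne_zero_of_cdfStar_lt_one (hΦ : ∀ z, cdfStar μZ z < 1) (z : ℝ) :
    μZ (Set.Ioi z) ≠ 0 := by
  have hlt : μZ.real (Set.Iic z) < 1 := by
    simpa [Set.Iic_def] using (measureReal_le_cdfStar (c := 1) (by norm_num) z).trans_lt (hΦ z)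
  have hpos : 0 < μZ.real (Set.Ioi z) := by
    rw [← Set.compl_Iic, probReal_compl_eq_one_sub measurableSet_Iic]
    linarith
  exact fun h0 => by simp [measureReal_def, h0] at hpos

lemma measure_Iio_ne_zero_of_cdfStar_lt_one (hΦ : ∀ z, cdfStar μZ z < 1) (z : ℝ) :
    μZ (Set.Iio z) ≠ 0 := by
  have hset : {y : ℝ | -1 * y ≤ -z} = Set.Ici z := by
    ext y
    simp [Set.mem_Ici]
  have hlt : μZ.real (Set.Ici z) < 1 := by
    rw [← hset]
    exact (measureReal_le_cdfStar (by norm_num) (-z)).trans_lt (hΦ (-z))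
  have hpos : 0 < μZ.real (Set.Iio z) := by
    rw [← Set.compl_Ici, probReal_compl_eq_one_sub measurableSet_Ici]
    linarith
  exact fun h0 => by simp [measureReal_def, h0] at hpos

lemma measure_sampleRegion_ne_zero (hΦ : ∀ z, cdfStar μZ z < 1) {K : ℕ} (a : Fin K) (M : ℝ)
    (b : Fin K) : μZ (sampleRegion a M b) ≠ 0 := by
  unfold sampleRegion
  split_ifs
  exacts [measure_Ioi_ne_zero_of_cdfStar_lt_one hΦ M, measure_Iio_ne_zero_of_cdfStar_lt_one hΦ 0]

end SamplingLaw

section Sampling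

variable {Ω : Type*} [MeasurableSpace Ω] {K : ℕ} {P : Measure Ω} {Z : Fin K → ℕ → Ω → ℝ}
  {μZ : Measure ℝ}

lemma measure_limsup_iInter_preimage_eq_one (hZ : ∀ a t, Measurable (Z a t))
    (hind : iIndepFun (fun p : Fin K × {t : ℕ // 1 ≤ t} => Z p.1 p.2) P)
    (hlaw : ∀ a t, 1 ≤ t → P.map (Z a t) = μZ) {S : Fin K → Set ℝ}
    (hS : ∀ b, MeasurableSet (S b)) (hSpos : ∀ b, μZ (S b) ≠ 0) :
    P (limsup (fun t => ⋂ b, Z b (t + 1) ⁻¹' S b) atTop) = 1 := by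
  let succRound : ℕ → {t : ℕ // 1 ≤ t} := fun t => ⟨t + 1, Nat.succ_pos t⟩
  have hround : Function.Injective succRound := fun u v h => by
    simpa [succRound] using congrArg Subtype.val h
  have hprob (t : ℕ) : P (⋂ b, Z b (t + 1) ⁻¹' S b) = ∏ b, μZ (S b) := by
    rw [hind.measure_iInter_preimage hS (succRound t)]
    refine Finset.prod_congr rfl fun b _ => ?_
    rw [← hlaw b (t + 1) (by omega), Measure.map_apply (hZ _ _) (hS b)]
  have hindep : iIndepSet (fun t => ⋂ b, Z b (t + 1) ⁻¹' S b) P :=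
    iIndepSet.precomp (g := succRound) hround (hind.iIndepSet_iInter_preimage (fun p => hZ _ _) hS)
  refine measure_limsup_eq_one (fun t => .iInter fun b => hZ b (t + 1) (hS b)) hindep ?_
  simp only [hprob]
  exact ENNReal.tsum_const_eq_top_of_ne_zero (Finset.prod_ne_zero_iff.2 fun b _ => hSpos b)

end Sampling

variable {Ω : Type*} [MeasurableSpace Ω] {K : ℕ}

/-- **Lemma (a.s. finiteness of the hitting times, Lemma 5.1).**
Suppose `Φ*(z) < 1` for every `z ∈ ℝ`.  Then for every arm `a`, every `n ≥ 0`, and every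
noise realization in `E_ξ(∞)` (i.e. in `E_ξ(x)` for some finite `x`), the hitting time
`τ_{a;n}` is `P^ξ`-a.s. finite and `n_{a;τ_{a;n}} = n` holds `P^ξ`-a.s.:
`P^ξ(τ_{a;n} < ∞) = P^ξ(n_{a;τ_{a;n}} = n) = 1`. -/
theorem hitTime_finite_as
    (P : Measure Ω) [IsProbabilityMeasure P]
    (μarm : Fin K → ℝ)
    (μZ : Measure ℝ) [IsProbabilityMeasure μZ]
    (hPhiStar : ∀ z : ℝ, cdfStar μZ z < 1)
    (ξ : Fin K → ℕ → ℝ) (hξ : ∃ x : ℝ, noiseEvent ξ x)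
    (Z : Fin K → ℕ → Ω → ℝ) (A : ℕ → Ω → Fin K)
    (hmodel : IsCondTSModel P μarm ξ Z A μZ) :
    ∀ (a : Fin K) (n : ℕ),
      P {ω | hitTime A a n ω < ⊤} = 1 ∧
      P {ω | ∃ t : ℕ, hitTime A a n ω = (t : ℕ∞) ∧ pulls A a t ω = n} = 1 := by
  obtain ⟨hZ, -, hind, hlaw, hmax⟩ := hmodel
  obtain ⟨x, hx⟩ := hξ
  intro a n
  set M := 2 * (∑ b, |μarm b| + 4 * x) * Real.sqrt n
  have hgood := measure_limsup_iInter_preimage_eq_one hZ hind hlaw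
    (measurableSet_sampleRegion a M) (measure_sampleRegion_ne_zero hPhiStar a M)
  have hreach : limsup (fun t => ⋂ b, Z b (t + 1) ⁻¹' sampleRegion a M b) atTop ⊆
      {ω | ∃ t, n ≤ pulls A a t ω} := fun ω hω =>
    exists_le_pulls_of_mem_limsup (hmax ω) (abs_empMean_le hx μarm A · · ω) hω
  have hfull : P {ω | ∃ t, n ≤ pulls A a t ω} = 1 :=
    le_antisymm prob_le_one (hgood ▸ measure_mono hreach)
  exact ⟨le_antisymm prob_le_one (hfull ▸ measure_mono fun _ => hitTime_lt_top),
    le_antisymm prob_le_one (hfull ▸ measure_mono fun _ => exists_hitTime_eq_and_pulls_eq)⟩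

end ThompsonSamplingCond
end

section
/- Let Z be a real random variable with c.d.f. Φ such that Φ(z) ∈ (0,1) for all z ∈ ℝ, and let Z' be an independent copy of Z. Define Φ*(z) = sup_{(a,a') : a² + a'² = 1} P(aZ + a'Z' ≤ z) and Ψ*(z) = inf_{(a,a') : a² + a'² = 1} P(aZ + a'Z' ≤ z). Then for every B > 0, sup_{z ∈ [−B,B]} max{ Φ*(z), 1 − Ψ*(z) } < 1. -/
/-!
On the unit circle `|a| + |a'| ≥ 1`. So if `Z` lies in the tail beyond `±T` that has the sign of
`a`, and `Z'` in the tail that has the sign of `a'`, then `aZ + a'Z' ≥ T`; this event has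
probability at least `m²`, where `m > 0` is the smaller tail mass of `Φ` beyond `±T`. Hence
`P(aZ + a'Z' ≤ z) ≤ 1 - m²` for `z < T` and, applied to `(-a, -a')`, `P(aZ + a'Z' ≤ z) ≥ m²`
for `z ≥ -T`, uniformly on the circle. Take `T = B + 1`.
-/

open MeasureTheory ProbabilityTheory Set

lemma one_le_abs_add_abs_of_sq_add_sq_eq_one {a b : ℝ} (h : a ^ 2 + b ^ 2 = 1) :
    1 ≤ |a| + |b| := by
  nlinarith [sq_abs a, sq_abs b, abs_nonneg a, abs_nonneg b, abs_mul_abs_self a]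

noncomputable def minTailMass (μ : Measure ℝ) (T : ℝ) : ℝ :=
  min (μ.real (Iic (-T))) (μ.real (Ioi T))

section Tails

variable {μ ν : Measure ℝ}

lemma minTailMass_nonneg (μ : Measure ℝ) (T : ℝ) : 0 ≤ minTailMass μ T :=
  le_min measureReal_nonneg measureReal_nonneg

lemma exists_minTailMass_le_forall_abs_mul_le (μ : Measure ℝ) (a T : ℝ) :
    ∃ S : Set ℝ, minTailMass μ T ≤ μ.real S ∧ ∀ x ∈ S, |a| * T ≤ a * x := by
  rcases le_or_gt 0 a with ha | ha
  · refine ⟨Ioi T, min_le_right _ _, fun x hx => ?_⟩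
    rw [abs_of_nonneg ha]
    exact mul_le_mul_of_nonneg_left (le_of_lt hx) ha
  · refine ⟨Iic (-T), min_le_left _ _, fun x hx => ?_⟩
    rw [abs_of_neg ha]
    nlinarith [mem_Iic.mp hx]

lemma minTailMass_mul_le_measureReal_le_add [IsFiniteMeasure μ] [IsFiniteMeasure ν]
    {a b T : ℝ} (hT : 0 ≤ T) (hab : a ^ 2 + b ^ 2 = 1) :
    minTailMass μ T * minTailMass ν T ≤ (μ.prod ν).real {p | T ≤ a * p.1 + b * p.2} := by
  obtain ⟨S, hμS, hS⟩ := exists_minTailMass_le_forall_abs_mul_le μ a T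
  obtain ⟨S', hνS', hS'⟩ := exists_minTailMass_le_forall_abs_mul_le ν b T
  have hsub : S ×ˢ S' ⊆ {p | T ≤ a * p.1 + b * p.2} := by
    rintro ⟨x, y⟩ ⟨hx, hy⟩
    calc T ≤ (|a| + |b|) * T :=
          le_mul_of_one_le_left hT (one_le_abs_add_abs_of_sq_add_sq_eq_one hab)
      _ ≤ a * x + b * y := by linarith [hS x hx, hS' y hy]
  calc minTailMass μ T * minTailMass ν T
      ≤ μ.real S * ν.real S' := by
        gcongr
        exact minTailMass_nonneg ν T
    _ = (μ.prod ν).real (S ×ˢ S') := (measureReal_prod_prod S S').symm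
    _ ≤ _ := measureReal_mono hsub

lemma minTailMass_pos [IsProbabilityMeasure μ] (hpos : ∀ z, 0 < μ.real (Iic z))
    (hlt : ∀ z, μ.real (Iic z) < 1) (T : ℝ) : 0 < minTailMass μ T := by
  refine lt_min (hpos _) ?_
  rw [← compl_Iic, probReal_compl_eq_one_sub measurableSet_Iic]
  linarith [hlt T]

lemma measureReal_add_le_le_one_sub [IsProbabilityMeasure μ] [IsProbabilityMeasure ν]
    {a b T z : ℝ} (hT : 0 ≤ T) (hab : a ^ 2 + b ^ 2 = 1) (hz : z < T) :
    (μ.prod ν).real {p | a * p.1 + b * p.2 ≤ z} ≤ 1 - minTailMass μ T * minTailMass ν T := by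
  have hmeas : MeasurableSet {p : ℝ × ℝ | a * p.1 + b * p.2 ≤ z} :=
    measurableSet_le (by fun_prop) measurable_const
  have hsub : {p : ℝ × ℝ | T ≤ a * p.1 + b * p.2} ⊆ {p | a * p.1 + b * p.2 ≤ z}ᶜ :=
    fun p hp => not_le.mpr (hz.trans_le hp)
  have := (minTailMass_mul_le_measureReal_le_add (μ := μ) (ν := ν) hT hab).trans
    (measureReal_mono hsub)
  rw [probReal_compl_eq_one_sub hmeas] at this
  linarith

lemma minTailMass_mul_le_measureReal_add_le [IsFiniteMeasure μ] [IsFiniteMeasure ν]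
    {a b T z : ℝ} (hT : 0 ≤ T) (hab : a ^ 2 + b ^ 2 = 1) (hz : -T ≤ z) :
    minTailMass μ T * minTailMass ν T ≤ (μ.prod ν).real {p | a * p.1 + b * p.2 ≤ z} := by
  refine (minTailMass_mul_le_measureReal_le_add (a := -a) (b := -b) hT
    (by linear_combination hab)).trans (measureReal_mono fun p hp => ?_)
  have : T ≤ -a * p.1 + -b * p.2 := hp
  show a * p.1 + b * p.2 ≤ z
  linarith

end Tails

/-- **Uniform non-degeneracy of the convolved c.d.f.'s.**
Let `Z` be a real random variable with c.d.f. `Φ` (here represented by its law `μ`,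
a Borel probability measure on `ℝ`) such that `Φ(z) ∈ (0,1)` for all `z`.  With `Z'` an
independent copy of `Z` (so that the pair `(Z,Z')` has law `μ.prod μ`), set
`Φ*(z) = sup_{a²+a'²=1} P(aZ + a'Z' ≤ z)` and `Ψ*(z) = inf_{a²+a'²=1} P(aZ + a'Z' ≤ z)`.
Then for every `B > 0`, `sup_{z∈[−B,B]} max{Φ*(z), 1 − Ψ*(z)} < 1`. -/
theorem sup_PhiStar_PsiStar_lt_one
    (μ : Measure ℝ) [IsProbabilityMeasure μ]
    (hΦpos : ∀ z : ℝ, 0 < (μ (Set.Iic z)).toReal)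
    (hΦlt : ∀ z : ℝ, (μ (Set.Iic z)).toReal < 1)
    (Φstar Ψstar : ℝ → ℝ)
    (hΦstar : ∀ z : ℝ, Φstar z =
      ⨆ v : {v : ℝ × ℝ // v.1 ^ 2 + v.2 ^ 2 = 1},
        ((μ.prod μ) {p : ℝ × ℝ | v.1.1 * p.1 + v.1.2 * p.2 ≤ z}).toReal)
    (hΨstar : ∀ z : ℝ, Ψstar z =
      ⨅ v : {v : ℝ × ℝ // v.1 ^ 2 + v.2 ^ 2 = 1},
        ((μ.prod μ) {p : ℝ × ℝ | v.1.1 * p.1 + v.1.2 * p.2 ≤ z}).toReal) :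
    ∀ B : ℝ, 0 < B → ∃ c : ℝ, c < 1 ∧
      ∀ z ∈ Set.Icc (-B) B, max (Φstar z) (1 - Ψstar z) ≤ c := by
  intro B hB
  have : Nonempty {v : ℝ × ℝ // v.1 ^ 2 + v.2 ^ 2 = 1} := ⟨⟨(1, 0), by norm_num⟩⟩
  have hT : 0 ≤ B + 1 := by linarith
  have hm : 0 < minTailMass μ (B + 1) * minTailMass μ (B + 1) :=
    mul_self_pos.mpr (minTailMass_pos hΦpos hΦlt (B + 1)).ne'
  refine ⟨1 - minTailMass μ (B + 1) * minTailMass μ (B + 1), by linarith, fun z hz => ?_⟩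
  refine max_le ?_ ?_
  · rw [hΦstar]
    exact ciSup_le fun v => measureReal_add_le_le_one_sub hT v.2 (by linarith [hz.2])
  · have : minTailMass μ (B + 1) * minTailMass μ (B + 1) ≤ Ψstar z := by
      rw [hΨstar]
      exact le_ciInf fun v => minTailMass_mul_le_measureReal_add_le hT v.2 (by linarith [hz.1])
    linarith
end
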